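/- For all f, g ∈ G: f∘g = (f⊣g)⊢g. -/

import Mathlib

inductive PTree : Type where
  | node : List PTree → PTree

mutual
  def leavesT : PTree → ℕ
    | .node [] => 1
    | .node (t :: ts) => leavesT t + leavesL ts
  def leavesL : List PTree → ℕ
    | [] => 0
    | t :: ts => leavesT t + leavesL ts
end

inductive Reduced : PTree → Prop where
  | leaf : Reduced (.node [])
  | node : ∀ ts : List PTree, 2 ≤ ts.length → (∀ t ∈ ts, Reduced t) → Reduced (.node ts)

mutual
  /-- Replace the leaves of a tree, from left to right, by the trees of a list;
  returns the resulting tree together with the unused trees of the list. -/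
  def graftT : PTree → List PTree → PTree × List PTree
    | .node [], l => (l.headD (.node []), l.tail)
    | .node (c :: cs), l =>
        let p := graftL (c :: cs) l
        (.node p.1, p.2)
  def graftL : List PTree → List PTree → List PTree × List PTree
    | [], l => ([], l)
    | c :: cs, l =>
        let p := graftT c l
        let q := graftL cs p.2
        (p.1 :: q.1, q.2)
end

/-- Schröder trees. -/
def SchT : Type := {t : PTree // Reduced t}

def leafST : SchT := ⟨.node [], Reduced.leaf⟩

/-- Decompositions `t = t₀ ∘ (t₁, …, t_n)` of a Schröder tree, where `t₀` has `n`
leaves. -/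
def Decomps (t : SchT) : Set (SchT × List SchT) :=
  {p | (p.2.map Subtype.val).length = leavesT p.1.val ∧
    (graftT p.1.val (p.2.map Subtype.val)).1 = t.val}

/-- The composition product of the group of the Schröder operad:
`(f∘g)(t) = Σ f(t₀)·g(t₁)⋯g(t_n)` over all decompositions `t = t₀∘(t₁,…,t_n)`. -/
noncomputable def compG (f g : SchT → ℚ) : SchT → ℚ :=
  fun t => ∑ᶠ p ∈ Decomps t, f p.1 * (p.2.map g).prod

/-- `(f⊣g)(t) = Σ f(t₀)·g(t₁)⋯g(t_{n−1})` over decompositions whose last entry is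
the leaf. -/
noncomputable def ldash (f g : SchT → ℚ) : SchT → ℚ :=
  fun t => ∑ᶠ p ∈ {p | p ∈ Decomps t ∧ p.2.getLast? = some leafST},
    f p.1 * (p.2.dropLast.map g).prod

/-- `(f⊢g)(t) = Σ f(t₀)·g(t_n)` over decompositions whose entries `t₁,…,t_{n−1}`
are all leaves. -/
noncomputable def rdash (f g : SchT → ℚ) : SchT → ℚ :=
  fun t => ∑ᶠ p ∈ {p | p ∈ Decomps t ∧ ∀ s ∈ p.2.dropLast, s = leafST},
    f p.1 * g (p.2.getLastD leafST)

/-- The identity element: the indicator function of the leaf. -/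
def eG : SchT → ℚ := fun t =>
  match t.val with
  | .node [] => 1
  | _ => 0

/-!
Every decomposition `t = t₀ ∘ (t₁, …, t_n)` factors uniquely in two stages, writing `|` for the
leaf: first `s = t₀ ∘ (t₁, …, t_{n-1}, |)`, then `t = s ∘ (|, …, |, t_n)`, because replacing the
last leaf of `s` by `t_n` gives back `t₀ ∘ (t₁, …, t_n)`. Pairs of decompositions of these two
shapes index the terms of `((f ⊣ g) ⊢ g)(t)`, and the correspondence preserves the weight
`f(t₀) g(t₁) ⋯ g(t_n)`. The sums involved are finite because a decomposition is determined by
`t₀`, whose size is bounded by that of `t`.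
-/

theorem leavesT_pos : ∀ t, 1 ≤ leavesT t
  | .node [] => by simp [leavesT]
  | .node (t :: ts) => by have := leavesT_pos t; simp [leavesT]; omega

theorem leavesT_node {cs : List PTree} (h : cs ≠ []) : leavesT (.node cs) = leavesL cs := by
  obtain ⟨c, cs, rfl⟩ := List.exists_cons_of_ne_nil h
  simp [leavesT, leavesL]

theorem graftT_node_cons (c : PTree) (cs l : List PTree) :
    graftT (.node (c :: cs)) l = (.node (graftL (c :: cs) l).1, (graftL (c :: cs) l).2) := rfl

theorem graftL_cons (c : PTree) (cs l : List PTree) :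
    graftL (c :: cs) l =
      ((graftT c l).1 :: (graftL cs (graftT c l).2).1, (graftL cs (graftT c l).2).2) := rfl

theorem length_graftL_fst : ∀ cs l, (graftL cs l).1.length = cs.length
  | [], _ => rfl
  | c :: cs, l => by simp [graftL_cons, length_graftL_fst cs]

mutual
  theorem graftT_snd : ∀ t l, (graftT t l).2 = l.drop (leavesT t)
    | .node [], l => by simp [graftT, leavesT, List.drop_one]
    | .node (c :: cs), l => by simp [graftT, leavesT, leavesL, graftL_snd (c :: cs) l]
  theorem graftL_snd : ∀ cs l, (graftL cs l).2 = l.drop (leavesL cs)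
    | [], l => by simp [graftL, leavesL]
    | c :: cs, l => by
        simp [graftL, leavesL, graftT_snd c l, graftL_snd cs, List.drop_drop, Nat.add_comm]
end

mutual
  theorem graftT_append : ∀ t l₁ l₂, leavesT t ≤ l₁.length →
      graftT t (l₁ ++ l₂) = ((graftT t l₁).1, (graftT t l₁).2 ++ l₂)
    | .node [], a :: _, _, _ => by simp [graftT]
    | .node (c :: cs), l₁, l₂, h => by
        rw [leavesT_node (List.cons_ne_nil c cs)] at h
        simp [graftT, graftL_append (c :: cs) l₁ l₂ h]
  theorem graftL_append : ∀ cs l₁ l₂, leavesL cs ≤ l₁.length →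
      graftL cs (l₁ ++ l₂) = ((graftL cs l₁).1, (graftL cs l₁).2 ++ l₂)
    | [], _, _, _ => by simp [graftL]
    | c :: cs, l₁, l₂, h => by
        simp only [leavesL] at h
        have h₂ : leavesL cs ≤ (graftT c l₁).2.length := by simp [graftT_snd]; omega
        simp [graftL, graftT_append c l₁ l₂ (by omega), graftL_append cs _ l₂ h₂]
end

theorem graftL_cons_append (c : PTree) (cs l₁ l₂ : List PTree) (h : l₁.length = leavesT c) :
    graftL (c :: cs) (l₁ ++ l₂) = ((graftT c l₁).1 :: (graftL cs l₂).1, (graftL cs l₂).2) := by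
  rw [graftL_cons, graftT_append c _ _ h.ge, graftT_snd, ← h]
  simp

mutual
  theorem graftT_replicate_leaf : ∀ t, graftT t (.replicate (leavesT t) (.node [])) = (t, [])
    | .node [] => by simp [graftT, leavesT]
    | .node (c :: cs) => by
        rw [leavesT_node (List.cons_ne_nil c cs), graftT_node_cons, graftL_replicate_leaf]
  theorem graftL_replicate_leaf : ∀ cs, graftL cs (.replicate (leavesL cs) (.node [])) = (cs, [])
    | [] => by simp [graftL, leavesL]
    | c :: cs => by
        rw [leavesL, List.replicate_add, graftL_cons_append c cs _ _ (by simp),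
          graftT_replicate_leaf, graftL_replicate_leaf]
end

mutual
  def replaceLastLeafT : PTree → PTree → PTree
    | .node [], s => s
    | .node (c :: cs), s => .node (replaceLastLeafL (c :: cs) s)
  def replaceLastLeafL : List PTree → PTree → List PTree
    | [], _ => []
    | [c], s => [replaceLastLeafT c s]
    | c :: cs, s => c :: replaceLastLeafL cs s
end

theorem replaceLastLeafT_node {cs : List PTree} (h : cs ≠ []) (s : PTree) :
    replaceLastLeafT (.node cs) s = .node (replaceLastLeafL cs s) := by
  obtain ⟨c, cs, rfl⟩ := List.exists_cons_of_ne_nil h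
  rfl

theorem replaceLastLeafL_cons (c : PTree) {cs : List PTree} (h : cs ≠ []) (s : PTree) :
    replaceLastLeafL (c :: cs) s = c :: replaceLastLeafL cs s := by
  obtain ⟨d, ds, rfl⟩ := List.exists_cons_of_ne_nil h
  rfl

mutual
  theorem graftT_replicate_leaf_append : ∀ t s,
      graftT t (.replicate (leavesT t - 1) (.node []) ++ [s]) = (replaceLastLeafT t s, [])
    | .node [], s => by simp [graftT, leavesT, replaceLastLeafT]
    | .node (c :: cs), s => by
        rw [leavesT_node (List.cons_ne_nil c cs), graftT_node_cons,
          graftL_replicate_leaf_append (c :: cs) s (List.cons_ne_nil c cs), replaceLastLeafT]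
  theorem graftL_replicate_leaf_append : ∀ cs s, cs ≠ [] →
      graftL cs (.replicate (leavesL cs - 1) (.node []) ++ [s]) = (replaceLastLeafL cs s, [])
    | [c], s, _ => by
        rw [graftL_cons, show leavesL [c] = leavesT c by simp [leavesL],
          graftT_replicate_leaf_append c s]
        rfl
    | c :: d :: ds, s, _ => by
        have hd := leavesT_pos d
        have h : leavesL (c :: d :: ds) - 1 = leavesT c + (leavesL (d :: ds) - 1) := by
          simp only [leavesL]; omega
        rw [h, List.replicate_add, List.append_assoc, graftL_cons_append c _ _ _ (by simp),
          graftT_replicate_leaf, graftL_replicate_leaf_append (d :: ds) s (List.cons_ne_nil d ds),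
          replaceLastLeafL_cons c (List.cons_ne_nil d ds)]
end

mutual
  theorem replaceLastLeafT_graftT : ∀ t l s, l.length + 1 = leavesT t →
      replaceLastLeafT (graftT t (l ++ [.node []])).1 s = (graftT t (l ++ [s])).1
    | .node [], l, s, h => by
        obtain rfl : l = [] := by simpa [leavesT] using h
        rfl
    | .node (c :: cs), l, s, h => by
        rw [leavesT_node (List.cons_ne_nil c cs)] at h
        have hne : (graftL (c :: cs) (l ++ [.node []])).1 ≠ [] := by
          simp [← List.length_pos_iff, length_graftL_fst]
        rw [graftT_node_cons, graftT_node_cons, replaceLastLeafT_node hne,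
          replaceLastLeafL_graftL (c :: cs) l s (List.cons_ne_nil c cs) h]
  theorem replaceLastLeafL_graftL : ∀ cs l s, cs ≠ [] → l.length + 1 = leavesL cs →
      replaceLastLeafL (graftL cs (l ++ [.node []])).1 s = (graftL cs (l ++ [s])).1
    | [c], l, s, _, h => by
        rw [show leavesL [c] = leavesT c by simp [leavesL]] at h
        simp only [graftL]
        rw [replaceLastLeafL, replaceLastLeafT_graftT c l s h]
    | c :: d :: ds, l, s, _, h => by
        have hd := leavesT_pos d
        simp only [leavesL] at h
        have hc : (l.take (leavesT c)).length = leavesT c := by simp; omega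
        have hrest : (l.drop (leavesT c)).length + 1 = leavesL (d :: ds) := by
          simp [leavesL]; omega
        have hne : (graftL (d :: ds) (l.drop (leavesT c) ++ [.node []])).1 ≠ [] := by
          simp [← List.length_pos_iff, length_graftL_fst]
        rw [← List.take_append_drop (leavesT c) l, List.append_assoc, List.append_assoc,
          graftL_cons_append c _ _ _ hc, graftL_cons_append c _ _ _ hc,
          replaceLastLeafL_cons _ hne,
          replaceLastLeafL_graftL (d :: ds) _ s (List.cons_ne_nil d ds) hrest]
end

theorem graftT_graftT_replicate_leaf_append (t : PTree) (l : List PTree) (s : PTree)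
    (h : l.length + 1 = leavesT t) :
    (graftT (graftT t (l ++ [.node []])).1
        (.replicate (leavesT (graftT t (l ++ [.node []])).1 - 1) (.node []) ++ [s])).1 =
      (graftT t (l ++ [s])).1 := by
  rw [graftT_replicate_leaf_append, replaceLastLeafT_graftT t l s h]

mutual
  theorem graftT_fst_inj : ∀ t l l', l.length = leavesT t → l'.length = leavesT t →
      (graftT t l).1 = (graftT t l').1 → l = l'
    | .node [], [a], [a'], _, _, he => by simpa [graftT] using he
    | .node (c :: cs), l, l', h, h', he => by
        rw [leavesT_node (List.cons_ne_nil c cs)] at h h'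
        exact graftL_fst_inj (c :: cs) l l' h h' (PTree.node.inj he)
  theorem graftL_fst_inj : ∀ cs l l', l.length = leavesL cs → l'.length = leavesL cs →
      (graftL cs l).1 = (graftL cs l').1 → l = l'
    | [], l, l', h, h', _ => by
        rw [List.eq_nil_of_length_eq_zero h, List.eq_nil_of_length_eq_zero h']
    | c :: cs, l, l', h, h', he => by
        simp only [leavesL] at h h'
        rw [← List.take_append_drop (leavesT c) l, ← List.take_append_drop (leavesT c) l'] at he ⊢
        rw [graftL_cons_append c _ _ _ (by simp; omega),
          graftL_cons_append c _ _ _ (by simp; omega)] at he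
        simp only [List.cons.injEq] at he
        rw [graftT_fst_inj c _ _ (by simp; omega) (by simp; omega) he.1,
          graftL_fst_inj cs _ _ (by simp; omega) (by simp; omega) he.2]
end

mutual
  theorem Reduced.graftT_fst : ∀ {t} (l : List PTree), Reduced t → (∀ u ∈ l, Reduced u) →
      Reduced (graftT t l).1
    | .node [], [], _, _ => Reduced.leaf
    | .node [], a :: _, _, hl => hl a List.mem_cons_self
    | .node (c :: cs), l, .node _ hlen hcs, hl =>
        .node _ (by simpa [length_graftL_fst] using hlen) (Reduced.graftL_fst l hcs hl)
  theorem Reduced.graftL_fst : ∀ {cs} (l : List PTree), (∀ c ∈ cs, Reduced c) →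
      (∀ u ∈ l, Reduced u) → ∀ u ∈ (graftL cs l).1, Reduced u
    | [], _, _, _ => by simp [graftL]
    | c :: cs, l, hcs, hl => by
        have hrest : ∀ u ∈ (graftT c l).2, Reduced u := fun u hu =>
          hl u (List.mem_of_mem_drop (graftT_snd c l ▸ hu))
        simp only [graftL_cons, List.mem_cons, forall_eq_or_imp]
        exact ⟨Reduced.graftT_fst l (hcs c List.mem_cons_self) hl,
          Reduced.graftL_fst _ (fun x hx => hcs x (List.mem_cons_of_mem c hx)) hrest⟩
end

mutual
  def sizeT : PTree → ℕ
    | .node ts => 1 + sizeL ts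
  def sizeL : List PTree → ℕ
    | [] => 0
    | t :: ts => sizeT t + sizeL ts
end

theorem sizeT_pos : ∀ t, 1 ≤ sizeT t
  | .node ts => by simp [sizeT]

theorem sizeT_le_sizeL_of_mem {t : PTree} : ∀ {ts : List PTree}, t ∈ ts → sizeT t ≤ sizeL ts
  | c :: cs, h => by
    rcases List.mem_cons.1 h with rfl | h
    · simp [sizeL]
    · have := sizeT_le_sizeL_of_mem h
      simp [sizeL]; omega

theorem length_le_sizeL : ∀ ts : List PTree, ts.length ≤ sizeL ts
  | [] => by simp [sizeL]
  | c :: cs => by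
    have := length_le_sizeL cs
    have := sizeT_pos c
    simp [sizeL]; omega

theorem length_le_sum_map_sizeT (l : List PTree) : l.length ≤ (l.map sizeT).sum := by
  simpa using List.length_le_sum_of_one_le (l.map sizeT) fun n hn => by
    obtain ⟨t, -, rfl⟩ := List.mem_map.1 hn
    exact sizeT_pos t

mutual
  theorem sizeT_graftT : ∀ t l, l.length = leavesT t →
      sizeT (graftT t l).1 + leavesT t = sizeT t + (l.map sizeT).sum
    | .node [], [a], _ => by simp [graftT, leavesT, sizeT, sizeL, Nat.add_comm]
    | .node (c :: cs), l, h => by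
        rw [leavesT_node (List.cons_ne_nil c cs)] at h ⊢
        have := sizeL_graftL (c :: cs) l h
        simp only [graftT_node_cons, sizeT]
        omega
  theorem sizeL_graftL : ∀ cs l, l.length = leavesL cs →
      sizeL (graftL cs l).1 + leavesL cs = sizeL cs + (l.map sizeT).sum
    | [], [], _ => by simp [graftL, leavesL, sizeL]
    | c :: cs, l, h => by
        simp only [leavesL] at h ⊢
        have hc : (l.take (leavesT c)).length = leavesT c := by simp; omega
        have := sizeT_graftT c _ hc
        have := sizeL_graftL cs (l.drop (leavesT c)) (by simp; omega)
        rw [← List.take_append_drop (leavesT c) l, graftL_cons_append c _ _ _ hc,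
          List.map_append, List.sum_append]
        simp only [sizeL]
        omega
end

theorem sizeT_le_sizeT_graftT {t : PTree} {l : List PTree} (h : l.length = leavesT t) :
    sizeT t ≤ sizeT (graftT t l).1 := by
  have := sizeT_graftT t l h
  have := length_le_sum_map_sizeT l
  omega

theorem finite_setOf_sizeT_le (N : ℕ) : {t : PTree | sizeT t ≤ N}.Finite := by
  induction N with
  | zero =>
      refine Set.finite_empty.subset fun t ht => ?_
      have : sizeT t ≤ 0 := ht
      have := sizeT_pos t
      omega
  | succ N ih =>
      have : Finite {t : PTree // sizeT t ≤ N} := ih.to_subtype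
      have : Finite {l : List {t : PTree // sizeT t ≤ N} // l.length ≤ N} :=
        (List.finite_length_le _ N).to_subtype
      refine (Set.finite_range fun l : {l : List {t : PTree // sizeT t ≤ N} // l.length ≤ N} =>
        PTree.node (l.1.map Subtype.val)).subset ?_
      rintro ⟨ts⟩ hts
      change 1 + sizeL ts ≤ N + 1 at hts
      have hmem : ∀ t ∈ ts, sizeT t ≤ N := fun t ht => by
        have := sizeT_le_sizeL_of_mem ht
        omega
      have hlen : ts.length ≤ N := by
        have := length_le_sizeL ts
        omega
      exact ⟨⟨ts.attach.map fun x => ⟨x.1, hmem x.1 x.2⟩, by simpa using hlen⟩,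
        by simp⟩

theorem List.dropLast_append_getLastD {α : Type*} {l : List α} (h : l ≠ []) (d : α) :
    l.dropLast ++ [l.getLastD d] = l := by
  rw [List.getLastD_eq_getLast?, List.getLast?_eq_some_getLast h]
  exact List.dropLast_append_getLast h

theorem List.replicate_append_getLastD {α : Type*} {l : List α} (h : l ≠ []) {d : α}
    (hd : ∀ a ∈ l.dropLast, a = d) : .replicate (l.length - 1) d ++ [l.getLastD d] = l := by
  conv_rhs => rw [← List.dropLast_append_getLastD h d]
  rw [List.eq_replicate_iff.2 ⟨List.length_dropLast, hd⟩]

theorem finsum_mem_finsum_mem_eq_finsum_mem_prod {α β M : Type*} [AddCommMonoid M]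
    {s : Set α} {t : α → Set β} (hs : s.Finite) (ht : ∀ a ∈ s, (t a).Finite) (f : α → β → M) :
    ∑ᶠ a ∈ s, ∑ᶠ b ∈ t a, f a b = ∑ᶠ x ∈ {x : α × β | x.1 ∈ s ∧ x.2 ∈ t x.1}, f x.1 x.2 := by
  have hunion : {x : α × β | x.1 ∈ s ∧ x.2 ∈ t x.1} = ⋃ a ∈ s, Prod.mk a '' t a := by
    ext ⟨a, b⟩
    simp [and_comm]
  rw [hunion, finsum_mem_biUnion _ hs fun a ha => (ht a ha).image _]
  · refine finsum_mem_congr rfl fun a _ => ?_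
    rw [finsum_mem_image (Prod.mk_right_injective a).injOn]
  · intro a _ a' _ hne
    simp [Set.disjoint_left, hne.symm]

@[simp]
theorem SchT.length_map_val (l : List SchT) : (l.map Subtype.val).length = l.length :=
  List.length_map _

@[simp]
theorem SchT.map_val_append (l₁ l₂ : List SchT) :
    (l₁ ++ l₂).map Subtype.val = l₁.map Subtype.val ++ l₂.map Subtype.val :=
  List.map_append ..

@[simp]
theorem SchT.map_val_singleton (s : SchT) : [s].map Subtype.val = [s.val] :=
  rfl

@[simp]
theorem SchT.map_val_replicate (n : ℕ) (s : SchT) :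
    (List.replicate n s).map Subtype.val = .replicate n s.val :=
  List.map_replicate ..

@[simp]
theorem leafST_val : leafST.val = .node [] :=
  rfl

theorem SchT.ext_iff {s t : SchT} : s = t ↔ s.val = t.val :=
  Subtype.ext_iff

def graftS (t₀ : SchT) (l : List SchT) : SchT :=
  ⟨(graftT t₀.val (l.map Subtype.val)).1,
    Reduced.graftT_fst _ t₀.2 fun u hu => by
      obtain ⟨v, -, rfl⟩ := List.mem_map.1 hu
      exact v.2⟩

theorem mem_decomps_iff {t : SchT} {p : SchT × List SchT} :
    p ∈ Decomps t ↔ p.2.length = leavesT p.1.val ∧ graftS p.1 p.2 = t := by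
  change (_ ∧ _) ↔ _
  rw [SchT.length_map_val, SchT.ext_iff]
  rfl

theorem graftS_graftS_replicate_leaf_append (t₀ : SchT) (l : List SchT) (s : SchT)
    (h : l.length + 1 = leavesT t₀.val) :
    graftS (graftS t₀ (l ++ [leafST]))
        (.replicate (leavesT (graftS t₀ (l ++ [leafST])).val - 1) leafST ++ [s]) =
      graftS t₀ (l ++ [s]) :=
  Subtype.ext <| by
    simpa [graftS] using
      graftT_graftT_replicate_leaf_append t₀.val (l.map Subtype.val) s.val (by simpa using h)

theorem decomps_finite (t : SchT) : (Decomps t).Finite := by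
  refine Set.Finite.of_finite_image (f := Prod.fst) ?_ ?_
  · refine ((finite_setOf_sizeT_le (sizeT t.val)).preimage Subtype.val_injective.injOn).subset ?_
    rintro _ ⟨p, hp, rfl⟩
    obtain ⟨hlen, rfl⟩ := mem_decomps_iff.1 hp
    exact sizeT_le_sizeT_graftT (by simpa using hlen)
  · rintro p hp q hq (hpq : p.1 = q.1)
    obtain ⟨hplen, rfl⟩ := mem_decomps_iff.1 hp
    obtain ⟨hqlen, hgraft⟩ := mem_decomps_iff.1 hq
    refine Prod.ext hpq (List.map_injective_iff.2 Subtype.val_injective ?_)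
    rw [hpq] at hplen hgraft
    exact graftT_fst_inj q.1.val _ _ (by simpa using hplen) (by simpa using hqlen)
      (congrArg Subtype.val hgraft.symm)

theorem ne_nil_of_mem_decomps {t : SchT} {p : SchT × List SchT} (hp : p ∈ Decomps t) :
    p.2 ≠ [] := by
  intro h
  have := leavesT_pos p.1.val
  simp [mem_decomps_iff, h] at hp
  omega

def rdashDecomps (t : SchT) : Set (SchT × List SchT) :=
  {p | p ∈ Decomps t ∧ ∀ s ∈ p.2.dropLast, s = leafST}

def ldashDecomps (t : SchT) : Set (SchT × List SchT) :=
  {q | q ∈ Decomps t ∧ q.2.getLast? = some leafST}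

def twoStageDecomps (t : SchT) : Set ((SchT × List SchT) × (SchT × List SchT)) :=
  {x | x.1 ∈ rdashDecomps t ∧ x.2 ∈ ldashDecomps x.1.1}

def joinLast (x : (SchT × List SchT) × (SchT × List SchT)) : SchT × List SchT :=
  (x.2.1, x.2.2.dropLast ++ [x.1.2.getLastD leafST])

def splitLast (y : SchT × List SchT) : (SchT × List SchT) × (SchT × List SchT) :=
  let s := graftS y.1 (y.2.dropLast ++ [leafST])
  ((s, .replicate (leavesT s.val - 1) leafST ++ [y.2.getLastD leafST]),
    (y.1, y.2.dropLast ++ [leafST]))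

theorem length_dropLast_add_one_of_mem_decomps {t : SchT} {p : SchT × List SchT}
    (hp : p ∈ Decomps t) : p.2.dropLast.length + 1 = leavesT p.1.val := by
  rw [List.length_dropLast, Nat.sub_add_cancel (List.length_pos_iff.2 (ne_nil_of_mem_decomps hp)),
    (mem_decomps_iff.1 hp).1]

theorem mem_rdashDecomps_iff {t : SchT} {p : SchT × List SchT} :
    p ∈ rdashDecomps t ↔ p ∈ Decomps t ∧
      .replicate (leavesT p.1.val - 1) leafST ++ [p.2.getLastD leafST] = p.2 := by
  refine ⟨fun ⟨hp, hleaf⟩ => ⟨hp, ?_⟩, fun ⟨hp, heq⟩ => ⟨hp, ?_⟩⟩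
  · rw [← (mem_decomps_iff.1 hp).1]
    exact List.replicate_append_getLastD (ne_nil_of_mem_decomps hp) hleaf
  · rw [← heq, List.dropLast_concat]
    exact fun s => List.eq_of_mem_replicate

theorem mem_ldashDecomps_iff {t : SchT} {q : SchT × List SchT} :
    q ∈ ldashDecomps t ↔ q ∈ Decomps t ∧ q.2.dropLast ++ [leafST] = q.2 := by
  refine ⟨fun ⟨hq, hlast⟩ => ⟨hq, List.dropLast_append_getLast? _ hlast⟩,
    fun ⟨hq, heq⟩ => ⟨hq, ?_⟩⟩
  rw [← heq, List.getLast?_concat]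

theorem mapsTo_joinLast (t : SchT) : Set.MapsTo joinLast (twoStageDecomps t) (Decomps t) := by
  rintro ⟨⟨s, ps⟩, ⟨t₀, qs⟩⟩ ⟨hp, hq⟩
  obtain ⟨hp, hps⟩ := mem_rdashDecomps_iff.1 hp
  obtain ⟨hq, hqs⟩ := mem_ldashDecomps_iff.1 hq
  have hlen := length_dropLast_add_one_of_mem_decomps hq
  refine mem_decomps_iff.2
    ⟨by simpa only [joinLast, List.length_append, List.length_singleton] using hlen, ?_⟩
  rw [← (mem_decomps_iff.1 hp).2, ← hps, ← (mem_decomps_iff.1 hq).2, ← hqs]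
  exact (graftS_graftS_replicate_leaf_append t₀ qs.dropLast _ hlen).symm

theorem mapsTo_splitLast (t : SchT) : Set.MapsTo splitLast (Decomps t) (twoStageDecomps t) := by
  rintro ⟨t₀, ys⟩ hy
  have hlen := length_dropLast_add_one_of_mem_decomps hy
  have hys := List.dropLast_append_getLastD (ne_nil_of_mem_decomps hy) leafST
  have hinner : (t₀, ys.dropLast ++ [leafST]) ∈ Decomps (graftS t₀ (ys.dropLast ++ [leafST])) :=
    mem_decomps_iff.2 ⟨by simpa using hlen, rfl⟩
  refine ⟨mem_rdashDecomps_iff.2 ⟨mem_decomps_iff.2 ⟨?_, ?_⟩, by simp [splitLast]⟩,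
    mem_ldashDecomps_iff.2 ⟨hinner, by simp [splitLast]⟩⟩
  · have := leavesT_pos (graftS t₀ (ys.dropLast ++ [leafST])).val
    simp only [splitLast, List.length_append, List.length_replicate, List.length_singleton]
    omega
  · simp only [splitLast]
    rw [graftS_graftS_replicate_leaf_append t₀ _ _ hlen, hys]
    exact (mem_decomps_iff.1 hy).2

theorem joinLast_splitLast {t : SchT} {y : SchT × List SchT} (hy : y ∈ Decomps t) :
    joinLast (splitLast y) = y := by
  simp only [joinLast, splitLast, List.dropLast_concat, List.getLastD_concat]
  rw [List.dropLast_append_getLastD (ne_nil_of_mem_decomps hy)]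

theorem splitLast_joinLast {t : SchT} {x : (SchT × List SchT) × (SchT × List SchT)}
    (hx : x ∈ twoStageDecomps t) : splitLast (joinLast x) = x := by
  obtain ⟨⟨s, ps⟩, ⟨t₀, qs⟩⟩ := x
  obtain ⟨hp, hq⟩ := hx
  obtain ⟨-, hps⟩ := mem_rdashDecomps_iff.1 hp
  obtain ⟨hq, hqs⟩ := mem_ldashDecomps_iff.1 hq
  have hs : graftS t₀ qs = s := (mem_decomps_iff.1 hq).2
  simp only [joinLast, splitLast, List.dropLast_concat, List.getLastD_concat, hqs, hs, hps]

theorem bijOn_joinLast (t : SchT) : Set.BijOn joinLast (twoStageDecomps t) (Decomps t) :=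
  Set.InvOn.bijOn ⟨fun _ hx => splitLast_joinLast hx, fun _ hy => joinLast_splitLast hy⟩
    (mapsTo_joinLast t) (mapsTo_splitLast t)

theorem rdash_ldash_apply (f g : SchT → ℚ) (t : SchT) :
    rdash (ldash f g) g t = ∑ᶠ x ∈ twoStageDecomps t,
      f x.2.1 * (x.2.2.dropLast.map g).prod * g (x.1.2.getLastD leafST) := by
  have hfin : ∀ s, (ldashDecomps s).Finite := fun s => (decomps_finite s).subset fun _ h => h.1
  calc rdash (ldash f g) g t
      = ∑ᶠ p ∈ rdashDecomps t, ∑ᶠ q ∈ ldashDecomps p.1,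
          f q.1 * (q.2.dropLast.map g).prod * g (p.2.getLastD leafST) :=
        finsum_mem_congr rfl fun p _ => finsum_mem_mul _ _
    _ = _ := finsum_mem_finsum_mem_eq_finsum_mem_prod
        ((decomps_finite t).subset fun _ h => h.1) (fun p _ => hfin p.1)
        fun p q => f q.1 * (q.2.dropLast.map g).prod * g (p.2.getLastD leafST)

/-- for all `f, g ∈ G`, `f∘g = (f⊣g)⊢g`. -/
theorem stmt13 (f g : SchT → ℚ) (hf : f leafST = 1) (hg : g leafST = 1) :
    compG f g = rdash (ldash f g) g := by
  funext t
  rw [rdash_ldash_apply]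
  refine (finsum_mem_eq_of_bijOn joinLast (bijOn_joinLast t) fun x _ => ?_).symm
  simp only [joinLast, List.map_append, List.prod_append, List.map_singleton, List.prod_singleton,
    mul_assoc]
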